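/- arXiv:1303.0919 — 2 statements merged into one kernel-verified Lean document; each statement's English description precedes it below -/
import Mathlib

section
/- Suppose the labeled graph (E,L) has no sinks or sources. Let {s_a, p_A} be a representation of (E,L,𝔅̄) in a C*-algebra B generated by {s_a} ∪ {p_A}, with p_C ≠ 0 for every nonempty C ∈ 𝔅̄ and admitting a gauge action. Then for A, B' ∈ 𝔅̄, the projection p_A belongs to the closed two-sided ideal I_{B'} of B generated by p_{B'} if and only if there exist N ≥ 1 and finitely many μ_1,…,μ_n ∈ L(B'E^{≥0}) (each μ_i either a labeled path of a path with source in B', or the empty word, with r(B',empty word) = B') such that ∪_{β∈L(AE^N)} r(A,β) ⊆ ∪_{i=1}^n r(B',μ_i). -/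
/-! # Common framework for labeled graph C*-algebras

Directed graphs, finite paths, labeled spaces `(E, L, 𝔅̄)` where `𝔅̄` is the
smallest accommodating set closed under relative complements (and containing
the sink parts of its members), loops and generalized loops, representations
of labeled spaces in C*-algebras, gauge actions, infinite projections,
AF algebras, and closed two-sided ideals. -/

noncomputable section

/-- A directed graph with vertex set `V` and edge set `E`. -/
structure DirGraph (V : Type*) (E : Type*) where
  src : E → V
  rng : E → V

variable {V E 𝒜 : Type*}

/-- A (finite) path of positive length in a directed graph: a nonempty list of
composable edges. -/
structure GPath (G : DirGraph V E) where
  edges : List E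
  ne : edges ≠ []
  chain : edges.Chain' fun e f => G.rng e = G.src f

namespace GPath

variable {G : DirGraph V E}

/-- The source vertex of a path. -/
def source (p : GPath G) : V := G.src (p.edges.head p.ne)

/-- The range vertex of a path. -/
def range (p : GPath G) : V := G.rng (p.edges.getLast p.ne)

/-- The length of a path. -/
def length (p : GPath G) : ℕ := p.edges.length

/-- The label word of a path under a labeling `L`. -/
def label (L : E → 𝒜) (p : GPath G) : List 𝒜 := p.edges.map L

end GPath

/-- The set of sinks of a graph (vertices emitting no edge). -/
def DirGraph.sinks (G : DirGraph V E) : Set V := {v | ∀ e, G.src e ≠ v}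

/-- `w ∈ L*(E)`: `w` is the label of some path of positive length. -/
def IsLabelWord (G : DirGraph V E) (L : E → 𝒜) (w : List 𝒜) : Prop :=
  ∃ p : GPath G, p.label L = w

/-- The range `r(w)` of a labeled path `w`. -/
def rngW (G : DirGraph V E) (L : E → 𝒜) (w : List 𝒜) : Set V :=
  {v | ∃ p : GPath G, p.label L = w ∧ p.range = v}

/-- The relative range `r(A, w)` of a labeled path `w` with respect to `A`. -/
def relRng (G : DirGraph V E) (L : E → 𝒜) (A : Set V) (w : List 𝒜) : Set V :=
  {v | ∃ p : GPath G, p.label L = w ∧ p.source ∈ A ∧ p.range = v}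

/-- `L(A E^n)`: labels of paths of length exactly `n` with source in `A`. -/
def labelsFromLen (G : DirGraph V E) (L : E → 𝒜) (A : Set V) (n : ℕ) : Set (List 𝒜) :=
  {w | ∃ p : GPath G, p.source ∈ A ∧ p.length = n ∧ p.label L = w}

/-- `L(A E^{≤n})`: labels of paths of length between `1` and `n` with source in `A`. -/
def labelsFromLe (G : DirGraph V E) (L : E → 𝒜) (A : Set V) (n : ℕ) : Set (List 𝒜) :=
  {w | ∃ p : GPath G, p.source ∈ A ∧ p.length ≤ n ∧ p.label L = w}

/-- `L(A E^{≥n})`: labels of paths of length at least `n` (and at least `1`)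
with source in `A`. -/
def labelsFromGe (G : DirGraph V E) (L : E → 𝒜) (A : Set V) (n : ℕ) : Set (List 𝒜) :=
  {w | ∃ p : GPath G, p.source ∈ A ∧ n ≤ p.length ∧ p.label L = w}

/-- `L(E^n A)`: labels of paths of length exactly `n` with range in `A`. -/
def labelsToLen (G : DirGraph V E) (L : E → 𝒜) (n : ℕ) (A : Set V) : Set (List 𝒜) :=
  {w | ∃ p : GPath G, p.range ∈ A ∧ p.length = n ∧ p.label L = w}

/-- `L(E^{≤l} v)`: labels of paths of length between `1` and `l` with range `v`. -/
def labelsToLe (G : DirGraph V E) (L : E → 𝒜) (l : ℕ) (v : V) : Set (List 𝒜) :=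
  {w | ∃ p : GPath G, p.range = v ∧ p.length ≤ l ∧ p.label L = w}

/-- `𝔅̄`: the smallest accommodating set for `(E, L)` (containing the ranges
`r(α)` for `α ∈ L*(E)` and closed under relative ranges, finite intersections
and finite unions) that is moreover closed under relative complements and
contains `A_sk = A ∩ sinks` for every `A` belonging to it. -/
inductive Bbar (G : DirGraph V E) (L : E → 𝒜) : Set V → Prop
  | base (w : List 𝒜) (hw : IsLabelWord G L w) : Bbar G L (rngW G L w)
  | rel (A : Set V) (w : List 𝒜) (hA : Bbar G L A) (hw : IsLabelWord G L w) :
      Bbar G L (relRng G L A w)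
  | inter (A B : Set V) (hA : Bbar G L A) (hB : Bbar G L B) : Bbar G L (A ∩ B)
  | union (A B : Set V) (hA : Bbar G L A) (hB : Bbar G L B) : Bbar G L (A ∪ B)
  | diff (A B : Set V) (hA : Bbar G L A) (hB : Bbar G L B) : Bbar G L (A \ B)
  | sk (A : Set V) (hA : Bbar G L A) : Bbar G L (A ∩ G.sinks)

/-- The standing assumptions on a labeled space `(E, L, 𝔅̄)`: weakly
left-resolving, set-finite, receiver set-finite, and no sink is a source. -/
structure StandingAssumptions (G : DirGraph V E) (L : E → 𝒜) : Prop where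
  wlr : ∀ A B : Set V, Bbar G L A → Bbar G L B → ∀ w : List 𝒜, IsLabelWord G L w →
    relRng G L A w ∩ relRng G L B w = relRng G L (A ∩ B) w
  setFinite : ∀ A : Set V, Bbar G L A → ∀ n : ℕ, 1 ≤ n → (labelsFromLen G L A n).Finite
  receiverSetFinite : ∀ A : Set V, Bbar G L A → ∀ n : ℕ, 1 ≤ n → (labelsToLen G L n A).Finite
  sinkNotSource : ∀ v ∈ G.sinks, ∃ e, G.rng e = v

/-- The `n`-fold concatenation `w^n` of a word `w`. -/
def wordPow (w : List 𝒜) (n : ℕ) : List 𝒜 := (List.replicate n w).flatten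

/-- A labeled path is repeatable if all its powers `w^n`, `n ≥ 1`, are again
labeled paths. -/
def Repeatable (G : DirGraph V E) (L : E → 𝒜) (w : List 𝒜) : Prop :=
  ∀ n : ℕ, 1 ≤ n → IsLabelWord G L (wordPow w n)

/-- The generalized vertex `[v]_l`: all non-source vertices receiving exactly
the same labeled paths of length at most `l` as `v` does. -/
def gvtx (G : DirGraph V E) (L : E → 𝒜) (l : ℕ) (v : V) : Set V :=
  {u | (∃ e, G.rng e = u) ∧ labelsToLe G L l u = labelsToLe G L l v}

/-- A generalized loop at `A`: a labeled path `α ∈ L(A E^{≥1} A)`. -/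
def IsGenLoop (G : DirGraph V E) (L : E → 𝒜) (A : Set V) (α : List 𝒜) : Prop :=
  ∃ p : GPath G, p.label L = α ∧ p.source ∈ A ∧ p.range ∈ A

/-- A loop at `A`: a generalized loop `α` at `A` such that `A ⊆ r(A, α)`. -/
def IsLoop (G : DirGraph V E) (L : E → 𝒜) (A : Set V) (α : List 𝒜) : Prop :=
  IsGenLoop G L A α ∧ A ⊆ relRng G L A α

/-- The nonempty initial segments (initial paths) of a word `α`. -/
def initialSegs (α : List 𝒜) : Set (List 𝒜) := {w | w ≠ [] ∧ w <+: α}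

/-- A loop `α` at `A` has an exit if (i) the initial segments of `α` form a
proper subset of `L(A E^{≤|α|})`, or (ii) `r(A, α_{[1,i]})` contains a sink for
some `1 ≤ i ≤ |α|`, or (iii) `A` is a proper subset of `r(A, α)`. -/
def HasExitLoop (G : DirGraph V E) (L : E → 𝒜) (A : Set V) (α : List 𝒜) : Prop :=
  initialSegs α ⊂ labelsFromLe G L A α.length ∨
  (∃ k : ℕ, 1 ≤ k ∧ k ≤ α.length ∧ (relRng G L A (α.take k) ∩ G.sinks).Nonempty) ∨
  A ⊂ relRng G L A α

/-- `A_0 E^{≤K} A_1 ⋯ E^{≤K} A_m ≠ ∅`: existence of `m` consecutively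
composable paths, each of length between `1` and `K`, the `j`-th going from
`As j` to `As (j+1)`. -/
def ChainExists (G : DirGraph V E) (As : ℕ → Set V) (K m : ℕ) : Prop :=
  ∃ xs : Fin m → GPath G,
    (∀ j : Fin m, (xs j).length ≤ K ∧ (xs j).source ∈ As j.val ∧
      (xs j).range ∈ As (j.val + 1)) ∧
    ∀ (j : ℕ) (h : j + 1 < m),
      (xs ⟨j, Nat.lt_of_succ_lt h⟩).range = (xs ⟨j + 1, h⟩).source

/-- Same as `ChainExists` but with all paths of length exactly `K`
(i.e. `A_0 E^K A_1 ⋯ E^K A_m ≠ ∅`). -/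
def ChainExistsExact (G : DirGraph V E) (As : ℕ → Set V) (K m : ℕ) : Prop :=
  ∃ xs : Fin m → GPath G,
    (∀ j : Fin m, (xs j).length = K ∧ (xs j).source ∈ As j.val ∧
      (xs j).range ∈ As (j.val + 1)) ∧
    ∀ (j : ℕ) (h : j + 1 < m),
      (xs ⟨j, Nat.lt_of_succ_lt h⟩).range = (xs ⟨j + 1, h⟩).source

/-- Condition (a): for every finite family `A_1, …, A_N` in `𝔅̄` and every
`K ≥ 1` there is `m₀ ≥ 1` such that
`A_{i_1} E^{≤K} A_{i_2} ⋯ E^{≤K} A_{i_n} = ∅` (`n` sets, `n - 1` path factors)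
for all `n > m₀` and all choices of indices. -/
def CondA (G : DirGraph V E) (L : E → 𝒜) : Prop :=
  ∀ (N : ℕ) (As : Fin N → Set V), (∀ i, Bbar G L (As i)) → ∀ K : ℕ, 1 ≤ K →
    ∃ m0 : ℕ, 1 ≤ m0 ∧ ∀ n : ℕ, m0 < n → ∀ ι : ℕ → Fin N,
      ¬ ChainExists G (fun j => As (ι j)) K (n - 1)

/-- A word is agreeable (for level `l`) if it is of the form `β^k β'` with
`β, β' ∈ L(E^{≤l})` and `β'` a nonempty initial segment of `β`. -/
def AgreeableW (G : DirGraph V E) (L : E → 𝒜) (l : ℕ) (α : List 𝒜) : Prop :=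
  ∃ (k : ℕ) (β β' : List 𝒜), IsLabelWord G L β ∧ IsLabelWord G L β' ∧
    β.length ≤ l ∧ β' ≠ [] ∧ β' <+: β ∧ α = wordPow β k ++ β'

/-- A representation of the labeled space `(E, L, 𝔅̄)` in a (C*-)algebra `B`:
projections `p A`, `A ∈ 𝔅̄`, and partial isometries `s a`, `a ∈ 𝒜`, satisfying
the defining relations of a labeled graph C*-algebra. -/
structure LRep (G : DirGraph V E) (L : E → 𝒜) (B : Type*)
    [NonUnitalRing B] [StarRing B] where
  p : Set V → B
  s : 𝒜 → B
  p_empty : p ∅ = 0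
  p_sa : ∀ A : Set V, Bbar G L A → star (p A) = p A
  p_mul : ∀ A A' : Set V, Bbar G L A → Bbar G L A' → p A * p A' = p (A ∩ A')
  p_union : ∀ A A' : Set V, Bbar G L A → Bbar G L A' →
    p (A ∪ A') = p A + p A' - p (A ∩ A')
  s_pi : ∀ a : 𝒜, s a * star (s a) * s a = s a
  p_s : ∀ (A : Set V) (a : 𝒜), Bbar G L A → p A * s a = s a * p (relRng G L A [a])
  s_s : ∀ a : 𝒜, star (s a) * s a = p (rngW G L [a])
  s_orth : ∀ a b : 𝒜, a ≠ b → star (s a) * s b = 0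
  ck : ∀ A : Set V, Bbar G L A →
    p A = (∑ᶠ a ∈ {a : 𝒜 | ∃ e, G.src e ∈ A ∧ L e = a},
      s a * p (relRng G L A [a]) * star (s a)) + p (A ∩ G.sinks)

/-- `s_α` for a word `α`: the product of the partial isometries of its letters
(junk value `0` on the empty word, which is never used). -/
def sWord {B : Type*} [NonUnitalRing B] (s : 𝒜 → B) : List 𝒜 → B
  | [] => 0
  | [a] => s a
  | a :: b :: w => s a * sWord s (b :: w)

/-- The range of a word in `L^#(E)` (`none` is the empty word, with range all
of `E^0`). -/
def owordRng (G : DirGraph V E) (L : E → 𝒜) : Option (List 𝒜) → Set V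
  | none => Set.univ
  | some w => rngW G L w

/-- The relative range of a word in `L^#(E)` with respect to `A` (`none` is
the empty word, with `r(A, ε) = A`). -/
def relRngE (G : DirGraph V E) (L : E → 𝒜) (A : Set V) : Option (List 𝒜) → Set V
  | none => A
  | some w => relRng G L A w

/-- The element `s_α p_A s_β*` of a representation, where `α`, `β` are words in
`L^#(E)` (`none` being the empty word `ε` with `s_ε` the identity). -/
def LRep.elt {B : Type*} [NonUnitalRing B] [StarRing B] {G : DirGraph V E} {L : E → 𝒜}
    (rep : LRep G L B) : Option (List 𝒜) → Set V → Option (List 𝒜) → B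
  | none, A, none => rep.p A
  | some α, A, none => sWord rep.s α * rep.p A
  | none, A, some β => rep.p A * star (sWord rep.s β)
  | some α, A, some β => sWord rep.s α * rep.p A * star (sWord rep.s β)

/-- A projection `q` is infinite if there is a partial isometry `u` with
`u* u = q`, `u u* ≤ q` and `u u* ≠ q`. -/
def IsInfiniteProjection (B : Type*) [NonUnitalRing B] [StarRing B] [PartialOrder B]
    (q : B) : Prop :=
  star q = q ∧ q * q = q ∧ ∃ u : B, star u * u = q ∧ u * star u ≤ q ∧ u * star u ≠ q

/-- A C*-algebra is AF if every finite subset can be approximated within any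
`ε > 0` from a finite-dimensional *-subalgebra. -/
def IsAFAlgebra (B : Type*) [NonUnitalNormedRing B] [StarRing B] [NormedSpace ℂ B] : Prop :=
  ∀ (F : Finset B) (ε : ℝ), 0 < ε →
    ∃ D : NonUnitalStarSubalgebra ℂ B, FiniteDimensional ℂ D ∧
      ∀ x ∈ F, ∃ y ∈ (D : Set B), ‖x - y‖ < ε

/-- A gauge action for a representation: a strongly continuous action of the
circle group by *-automorphisms fixing the projections and scaling the
generating partial isometries. -/
structure GaugeAction {B : Type*} [NonUnitalCStarAlgebra B]
    (G : DirGraph V E) (L : E → 𝒜) (rep : LRep G L B) where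
  γ : Circle → B ≃⋆ₐ[ℂ] B
  γ_mul : ∀ z w : Circle, γ (z * w) = (γ w).trans (γ z)
  γ_continuous : ∀ x : B, Continuous fun z => γ z x
  γ_s : ∀ (z : Circle) (a : 𝒜), γ z (rep.s a) = (z : ℂ) • rep.s a
  γ_p : ∀ (z : Circle) (A : Set V), Bbar G L A → γ z (rep.p A) = rep.p A

/-- The representation generates `B` as a C*-algebra. -/
def GeneratesAlg {B : Type*} [NonUnitalCStarAlgebra B]
    (G : DirGraph V E) (L : E → 𝒜) (rep : LRep G L B) : Prop :=
  closure (NonUnitalStarAlgebra.adjoin ℂ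
    ({x : B | ∃ a : 𝒜, x = rep.s a} ∪ {x : B | ∃ A : Set V, Bbar G L A ∧ x = rep.p A}) : Set B)
    = Set.univ

/-- A closed two-sided ideal of a C*-algebra (as a set). -/
def IsClosedTwoSidedIdealSet (B : Type*) [NonUnitalNormedRing B] [NormedSpace ℂ B]
    (I : Set B) : Prop :=
  IsClosed I ∧ (0 : B) ∈ I ∧ (∀ x ∈ I, ∀ y ∈ I, x + y ∈ I) ∧
    (∀ (c : ℂ), ∀ x ∈ I, c • x ∈ I) ∧ ∀ x ∈ I, ∀ y : B, x * y ∈ I ∧ y * x ∈ I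

/-- The closed two-sided ideal generated by an element. -/
def closedIdealGen (B : Type*) [NonUnitalNormedRing B] [NormedSpace ℂ B] (q : B) : Set B :=
  ⋂₀ {I : Set B | IsClosedTwoSidedIdealSet B I ∧ q ∈ I}



/-! The closed ideal generated by `p_{B'}` is the closed linear span of the elements
`s_α p_C s_β*` with `C ∈ 𝔅̄` covered by finitely many relative ranges `r(B', μ)`.

If `⋃_{β ∈ L(A E^N)} r(A, β)` is covered, iterating the Cuntz–Krieger relation `N` times
writes `p_A` through the projections `p_{r(A, β)} ≤ Σ p_{r(B', μ_i)}`, and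
`p_{r(B', μ)} = s_μ* p_{B'} s_μ`.

Conversely, if `p_A` lies in that ideal, pick a finite combination `z` of the spanning elements
with `‖p_A - z‖ < 1`; applying the gauge expectation we may assume `|α| = |β|` in every term.
For a word `w` longer than every `α`, let `Q` be the part of `r(A, w)` not covered by the sets
`r(C, w_{(|α|, |w|]})`. Then `p_Q s_w* (p_A - z) s_w p_Q = p_Q`, so `‖p_Q‖ < 1`, i.e. `Q = ∅`. -/

lemma IsStarProjection.eq_zero_of_norm_lt_one {R : Type*} [NonUnitalNormedRing R] [StarRing R]
    [CStarRing R] {e : R} (he : IsStarProjection e) (h : ‖e‖ < 1) : e = 0 := by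
  have hsq : ‖e‖ * ‖e‖ = ‖e‖ := by
    rw [← CStarRing.norm_star_mul_self, he.isSelfAdjoint.star_eq, he.isIdempotentElem.eq]
  exact norm_eq_zero.mp (by nlinarith [norm_nonneg e])

lemma norm_mul_mul_le_of_norm_le_one {R : Type*} [NonUnitalSeminormedRing R] {a b : R}
    (ha : ‖a‖ ≤ 1) (hb : ‖b‖ ≤ 1) (y : R) : ‖a * y * b‖ ≤ ‖y‖ :=
  calc ‖a * y * b‖ ≤ ‖a‖ * ‖y‖ * ‖b‖ := norm_mul₃_le
    _ ≤ 1 * ‖y‖ * 1 := by gcongr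
    _ = ‖y‖ := by ring

section Span

variable {R A : Type*}

lemma mul_mem_span_of_forall_mem [Semiring R] [NonUnitalNonAssocSemiring A] [Module R A]
    [IsScalarTower R A A] {S : Set A} {g : A} (h : ∀ x ∈ S, x * g ∈ Submodule.span R S)
    {x : A} (hx : x ∈ Submodule.span R S) : x * g ∈ Submodule.span R S :=
  (Submodule.span_le (p := (Submodule.span R S).comap (LinearMap.mulRight R g))).mpr h hx

lemma star_mem_span_of_forall_mem [CommSemiring R] [StarRing R] [AddCommMonoid A]
    [StarAddMonoid A] [Module R A] [StarModule R A] {S : Set A} (h : ∀ x ∈ S, star x ∈ S)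
    {x : A} (hx : x ∈ Submodule.span R S) : star x ∈ Submodule.span R S := by
  induction hx using Submodule.span_induction with
  | mem x hx => exact Submodule.subset_span (h x hx)
  | zero => simp
  | add x y _ _ hx hy => simpa using add_mem hx hy
  | smul c x _ hx => simpa using Submodule.smul_mem _ (star c) hx

lemma isClosedTwoSidedIdealSet_closure {B : Type*} [NonUnitalNormedRing B] [NormedSpace ℂ B]
    {S : Submodule ℂ B} {D : Set B} (hD : Dense D)
    (hS : ∀ x ∈ S, ∀ y ∈ D, x * y ∈ S ∧ y * x ∈ S) :
    IsClosedTwoSidedIdealSet B (closure S) := by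
  have hcl : closure (S : Set B) = S.topologicalClosure := S.topologicalClosure_coe.symm
  refine ⟨isClosed_closure, subset_closure S.zero_mem, fun x hx y hy => ?_, fun c x hx => ?_,
    fun x hx y => ⟨?_, ?_⟩⟩
  · rw [hcl] at hx hy ⊢
    exact add_mem hx hy
  · rw [hcl] at hx ⊢
    exact Submodule.smul_mem _ c hx
  · exact map_mem_closure₂ continuous_mul hx (hD.closure_eq ▸ Set.mem_univ y)
      fun a ha b hb => (hS a ha b hb).1
  · exact map_mem_closure₂ (f := fun a b => b * a) (continuous_snd.mul continuous_fst) hx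
      (hD.closure_eq ▸ Set.mem_univ y) fun a ha b hb => (hS a ha b hb).2

end Span

lemma integral_circleExp_zpow (k : ℤ) :
    ∫ t in (0 : ℝ)..2 * Real.pi, ((Circle.exp t ^ k : Circle) : ℂ) =
      if k = 0 then ((2 * Real.pi : ℝ) : ℂ) else 0 := by
  split_ifs with hk
  · simp [hk]
  have hc : (k : ℂ) * Complex.I ≠ 0 := mul_ne_zero (by exact_mod_cast hk) Complex.I_ne_zero
  have hexp : ∀ t : ℝ, ((Circle.exp t ^ k : Circle) : ℂ) = Complex.exp ((k * Complex.I) * t) :=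
    fun t => by rw [← Circle.exp_intCast_mul, Circle.coe_exp]; push_cast; ring_nf
  simp only [hexp, integral_exp_mul_complex hc]
  have h2π : Complex.exp (k * Complex.I * (2 * Real.pi)) = 1 := by
    rw [← Complex.exp_int_mul_two_pi_mul_I k]; ring_nf
  simp [h2π]

def IsClosedTwoSidedIdealSet.toTwoSidedIdeal {B : Type*} [NonUnitalNormedRing B]
    [NormedSpace ℂ B] {I : Set B} (hI : IsClosedTwoSidedIdealSet B I) : TwoSidedIdeal B :=
  .mk' I hI.2.1 (hI.2.2.1 _ · _ ·) (fun hx => by simpa using hI.2.2.2.1 (-1) _ hx)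
    (fun hy => (hI.2.2.2.2 _ hy _).2) (fun hx => (hI.2.2.2.2 _ hx _).1)

@[simp] lemma IsClosedTwoSidedIdealSet.mem_toTwoSidedIdeal {B : Type*} [NonUnitalNormedRing B]
    [NormedSpace ℂ B] {I : Set B} (hI : IsClosedTwoSidedIdealSet B I) {x : B} :
    x ∈ hI.toTwoSidedIdeal ↔ x ∈ I :=
  TwoSidedIdeal.mem_mk' ..

namespace GPath

variable {G : DirGraph V E} {L : E → 𝒜}

variable (G) in
def single (e : E) : GPath G := ⟨[e], List.cons_ne_nil e [], List.isChain_singleton e⟩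

def cons (e : E) (q : GPath G) (h : G.rng e = q.source) : GPath G where
  edges := e :: q.edges
  ne := List.cons_ne_nil _ _
  chain := by
    obtain ⟨f, t, ht⟩ := List.exists_cons_of_ne_nil q.ne
    have hq := q.chain
    have hsrc : q.source = G.src f := by simp [source, ht]
    rw [ht] at hq ⊢
    exact List.IsChain.cons_cons (h.trans hsrc) hq

lemma cons_range (e : E) (q : GPath G) (h) : (cons e q h).range = q.range :=
  congrArg G.rng (List.getLast_cons q.ne)

lemma length_label (p : GPath G) : (p.label L).length = p.length := List.length_map _

lemma label_ne_nil (p : GPath G) : p.label L ≠ [] := by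
  simpa [label] using p.ne

lemma eq_single_of_label_eq_singleton {p : GPath G} {a : 𝒜} (h : p.label L = [a]) :
    ∃ e, L e = a ∧ p = single G e := by
  rcases p with ⟨_ | ⟨e, _ | ⟨f, t⟩⟩, hne, hch⟩
  · exact absurd rfl hne
  · exact ⟨e, by simpa [label] using h, rfl⟩
  · simp [label] at h

lemma eq_cons_of_label_eq_cons {p : GPath G} {a : 𝒜} {w : List 𝒜} (hw : w ≠ [])
    (h : p.label L = a :: w) : ∃ e q h', L e = a ∧ q.label L = w ∧ p = cons e q h' := by
  rcases p with ⟨_ | ⟨e, _ | ⟨f, t⟩⟩, hne, hch⟩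
  · exact absurd rfl hne
  · simp only [label, List.map_cons, List.map_nil, List.cons.injEq] at h
    exact absurd h.2.symm hw
  · simp only [label, List.map_cons, List.cons.injEq] at h
    exact ⟨e, ⟨f :: t, List.cons_ne_nil f t, hch.tail⟩,
      (List.isChain_cons_cons.mp hch).1, h.1, by simpa [label] using h.2, rfl⟩

end GPath

section RelativeRanges

variable {G : DirGraph V E} {L : E → 𝒜}

lemma mem_relRng_singleton {A : Set V} {a : 𝒜} {v : V} :
    v ∈ relRng G L A [a] ↔ ∃ e, L e = a ∧ G.src e ∈ A ∧ G.rng e = v := by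
  constructor
  · rintro ⟨p, hlab, hsrc, rfl⟩
    obtain ⟨e, rfl, rfl⟩ := GPath.eq_single_of_label_eq_singleton hlab
    exact ⟨e, rfl, hsrc, rfl⟩
  · rintro ⟨e, rfl, hsrc, rfl⟩
    exact ⟨GPath.single G e, rfl, hsrc, rfl⟩

lemma exists_cons_of_source_mem_relRng {A : Set V} {a : 𝒜} (q : GPath G)
    (hq : q.source ∈ relRng G L A [a]) :
    ∃ p : GPath G, p.label L = a :: q.label L ∧ p.source ∈ A ∧ p.range = q.range ∧
      p.length = q.length + 1 := by
  obtain ⟨e, rfl, hsrc, he⟩ := mem_relRng_singleton.mp hq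
  exact ⟨GPath.cons e q he, rfl, hsrc, GPath.cons_range e q he, rfl⟩

lemma relRng_cons (A : Set V) (a : 𝒜) {w : List 𝒜} (hw : w ≠ []) :
    relRng G L A (a :: w) = relRng G L (relRng G L A [a]) w := by
  ext v
  constructor
  · rintro ⟨p, hlab, hsrc, rfl⟩
    obtain ⟨e, q, he, rfl, rfl, rfl⟩ := GPath.eq_cons_of_label_eq_cons hw hlab
    exact ⟨q, rfl, mem_relRng_singleton.mpr ⟨e, rfl, hsrc, he⟩, (GPath.cons_range e q he).symm⟩
  · rintro ⟨q, rfl, hq, rfl⟩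
    obtain ⟨p, hlab, hsrc, hrng, -⟩ := exists_cons_of_source_mem_relRng q hq
    exact ⟨p, hlab, hsrc, hrng⟩

lemma relRng_append (A : Set V) {u v : List 𝒜} (hu : u ≠ []) (hv : v ≠ []) :
    relRng G L A (u ++ v) = relRng G L (relRng G L A u) v := by
  induction u generalizing A with
  | nil => exact absurd rfl hu
  | cons a u ih =>
    rcases eq_or_ne u [] with rfl | hu'
    · exact relRng_cons A a hv
    · rw [List.cons_append, relRng_cons A a (by simp [hu']), ih _ hu', relRng_cons A a hu']

lemma relRng_nil (A : Set V) : relRng G L A [] = ∅ :=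
  Set.eq_empty_of_forall_notMem fun _ ⟨p, hlab, _⟩ => p.label_ne_nil hlab

lemma relRng_mono {A A' : Set V} (h : A ⊆ A') (w : List 𝒜) :
    relRng G L A w ⊆ relRng G L A' w :=
  fun _ ⟨p, hlab, hsrc, hrng⟩ => ⟨p, hlab, h hsrc, hrng⟩

lemma relRng_iUnion {ι : Sort*} (f : ι → Set V) (w : List 𝒜) :
    relRng G L (⋃ i, f i) w = ⋃ i, relRng G L (f i) w := by
  ext v
  simp only [relRng, Set.mem_iUnion, Set.mem_ofPred_eq]
  constructor
  · rintro ⟨p, hlab, ⟨i, hi⟩, hrng⟩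
    exact ⟨i, p, hlab, hi, hrng⟩
  · rintro ⟨i, p, hlab, hi, hrng⟩
    exact ⟨p, hlab, ⟨i, hi⟩, hrng⟩

lemma rngW_eq_relRng_univ (w : List 𝒜) : rngW G L w = relRng G L Set.univ w := by
  ext v
  exact ⟨fun ⟨p, h1, h2⟩ => ⟨p, h1, trivial, h2⟩, fun ⟨p, h1, _, h3⟩ => ⟨p, h1, h3⟩⟩

lemma relRng_subset_rngW (A : Set V) (w : List 𝒜) : relRng G L A w ⊆ rngW G L w :=
  rngW_eq_relRng_univ (G := G) (L := L) w ▸ relRng_mono (Set.subset_univ A) w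

lemma rngW_cons (a : 𝒜) {w : List 𝒜} (hw : w ≠ []) :
    rngW G L (a :: w) = relRng G L (rngW G L [a]) w := by
  rw [rngW_eq_relRng_univ, relRng_cons _ a hw, rngW_eq_relRng_univ]

lemma relRng_relRngE_subset (A : Set V) (o : Option (List 𝒜)) (v : List 𝒜) :
    relRng G L (relRngE G L A o) v ⊆ relRng G L A (o.getD [] ++ v) := by
  rcases o with _ | u
  · exact subset_rfl
  rcases eq_or_ne u [] with rfl | hu
  · simpa [relRngE, relRng_nil] using relRng_mono (Set.empty_subset A) v
  rcases eq_or_ne v [] with rfl | hv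
  · simp [relRng_nil]
  · exact (relRng_append A hu hv).ge

lemma mem_labelsFromGe_one_of_mem_relRng {A : Set V} {w : List 𝒜} {v : V}
    (h : v ∈ relRng G L A w) : w ∈ labelsFromGe G L A 1 :=
  let ⟨p, hlab, hsrc, _⟩ := h
  ⟨p, hsrc, List.length_pos_iff.mpr p.ne, hlab⟩

lemma length_of_mem_labelsFromLen {A : Set V} {N : ℕ} {w : List 𝒜}
    (h : w ∈ labelsFromLen G L A N) : w.length = N :=
  let ⟨p, _, hlen, hlab⟩ := h
  hlab ▸ p.length_label.trans hlen

lemma cons_mem_labelsFromLen {A : Set V} {a : 𝒜} {N : ℕ} {w : List 𝒜}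
    (h : w ∈ labelsFromLen G L (relRng G L A [a]) N) : a :: w ∈ labelsFromLen G L A (N + 1) := by
  obtain ⟨q, hq, rfl, rfl⟩ := h
  obtain ⟨p, hlab, hsrc, -, hlen⟩ := exists_cons_of_source_mem_relRng q hq
  exact ⟨p, hsrc, hlen, hlab⟩

lemma singleton_mem_labelsFromLen_one {A : Set V} {e : E} (he : G.src e ∈ A) :
    [L e] ∈ labelsFromLen G L A 1 :=
  ⟨GPath.single G e, he, rfl, rfl⟩

end RelativeRanges

def Covered (G : DirGraph V E) (L : E → 𝒜) (B' C : Set V) : Prop :=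
  ∃ S : Set (Option (List 𝒜)), S.Finite ∧ C ⊆ ⋃ o ∈ S, relRngE G L B' o

namespace Covered

variable {G : DirGraph V E} {L : E → 𝒜} {B' C : Set V}

lemma self (B' : Set V) : Covered G L B' B' :=
  ⟨{none}, Set.finite_singleton none, by simp [relRngE]⟩

lemma mono (h : Covered G L B' C) {D : Set V} (hDC : D ⊆ C) : Covered G L B' D :=
  let ⟨S, hS, hC⟩ := h
  ⟨S, hS, hDC.trans hC⟩

lemma relRng (h : Covered G L B' C) (v : List 𝒜) : Covered G L B' (relRng G L C v) := by
  obtain ⟨S, hS, hC⟩ := h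
  refine ⟨(fun o => some (o.getD [] ++ v)) '' S, hS.image _, ?_⟩
  calc _ ⊆ _root_.relRng G L (⋃ o ∈ S, relRngE G L B' o) v := relRng_mono hC v
    _ = ⋃ o ∈ S, _root_.relRng G L (relRngE G L B' o) v := by simp only [relRng_iUnion]
    _ ⊆ ⋃ o ∈ S, relRngE G L B' (some (o.getD [] ++ v)) :=
      Set.iUnion₂_mono fun o _ => relRng_relRngE_subset B' o v
    _ = _ := Set.biUnion_image.symm

lemma biUnion {ι : Type*} {T : Set ι} (hT : T.Finite) {f : ι → Set V}
    (h : ∀ t ∈ T, Covered G L B' (f t)) : Covered G L B' (⋃ t ∈ T, f t) := by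
  choose! S hS hsub using h
  exact ⟨⋃ t ∈ T, S t, hT.biUnion hS, Set.iUnion₂_subset fun t ht => (hsub t ht).trans
    (Set.biUnion_mono (Set.subset_biUnion_of_mem ht) fun _ _ => subset_rfl)⟩

end Covered

/-- Words `μ` with `r(B', μ) = ∅` may be traded for the empty word, which is why the covering
words can always be taken in `L(B' E^{≥ 0})`. -/
lemma covered_iff_exists_fin {G : DirGraph V E} {L : E → 𝒜} {B' C : Set V} :
    Covered G L B' C ↔ ∃ (n : ℕ) (μ : Fin n → Option (List 𝒜)),
      (∀ (i : Fin n) (w : List 𝒜), μ i = some w → w ∈ labelsFromGe G L B' 1) ∧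
      C ⊆ ⋃ i, relRngE G L B' (μ i) := by
  constructor
  · rintro ⟨S, hS, hC⟩
    have hnormal : ∀ o : Option (List 𝒜), ∃ o' : Option (List 𝒜),
        (∀ w, o' = some w → w ∈ labelsFromGe G L B' 1) ∧ relRngE G L B' o ⊆ relRngE G L B' o' := by
      rintro (_ | w)
      · exact ⟨none, by simp, subset_rfl⟩
      by_cases hw : w ∈ labelsFromGe G L B' 1
      · exact ⟨some w, by simpa using hw, subset_rfl⟩
      · exact ⟨none, by simp, fun v hv => absurd (mem_labelsFromGe_one_of_mem_relRng hv) hw⟩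
    choose g hg hsub using hnormal
    obtain ⟨n, μ, hμ⟩ := (hS.image g).fin_embedding
    refine ⟨n, μ, fun i w hi => ?_, ?_⟩
    · obtain ⟨o, -, ho⟩ := hμ.le (Set.mem_range_self i)
      exact hg o w (ho.trans hi)
    · rw [← Set.biUnion_range (g := relRngE G L B'), hμ, Set.biUnion_image]
      exact hC.trans (Set.iUnion₂_mono fun o _ => hsub o)
  · rintro ⟨n, μ, -, hC⟩
    exact ⟨Set.range μ, Set.finite_range μ, by rwa [Set.biUnion_range]⟩

section Bbar

variable {G : DirGraph V E} {L : E → 𝒜}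

lemma isLabelWord_singleton (hL : Function.Surjective L) (a : 𝒜) : IsLabelWord G L [a] :=
  let ⟨e, he⟩ := hL a
  ⟨GPath.single G e, congrArg (· :: []) he⟩

lemma Bbar.empty {A : Set V} (hA : Bbar G L A) : Bbar G L ∅ := by
  simpa using Bbar.diff A A hA hA

lemma Bbar.relRng (hL : Function.Surjective L) {A : Set V} (hA : Bbar G L A) (w : List 𝒜) :
    Bbar G L (relRng G L A w) := by
  induction w generalizing A with
  | nil => exact relRng_nil (G := G) (L := L) A ▸ hA.empty
  | cons a w ih =>
    have ha := Bbar.rel A [a] hA (isLabelWord_singleton hL a)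
    rcases eq_or_ne w [] with rfl | hw
    · exact ha
    · exact relRng_cons A a hw ▸ ih ha

lemma Bbar.rngW (hL : Function.Surjective L) {w : List 𝒜} (hw : w ≠ []) :
    Bbar G L (rngW G L w) := by
  obtain ⟨a, w, rfl⟩ := List.exists_cons_of_ne_nil hw
  have ha := Bbar.base [a] (isLabelWord_singleton (G := G) hL a)
  rcases eq_or_ne w [] with rfl | hw
  · exact ha
  · exact rngW_cons a hw ▸ ha.relRng hL w

lemma Bbar.diff_biUnion {ι : Type*} {A : Set V} (hA : Bbar G L A) (s : Finset ι)
    {f : ι → Set V} (hf : ∀ i ∈ s, Bbar G L (f i)) : Bbar G L (A \ ⋃ i ∈ s, f i) := by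
  classical
  induction s using Finset.induction_on with
  | empty => simpa using hA
  | insert i s _ ih =>
    rw [Finset.set_biUnion_insert, Set.union_comm, ← Set.sdiff_sdiff]
    exact Bbar.diff _ _ (ih fun j hj => hf j (Finset.mem_insert_of_mem hj))
      (hf i (Finset.mem_insert_self i s))

end Bbar

section Words

variable {B : Type*} [NonUnitalRing B] (s : 𝒜 → B)

lemma sWord_cons (a : 𝒜) {w : List 𝒜} (hw : w ≠ []) : sWord s (a :: w) = s a * sWord s w := by
  obtain ⟨b, w, rfl⟩ := List.exists_cons_of_ne_nil hw
  rfl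

lemma sWord_append {u v : List 𝒜} (hu : u ≠ []) (hv : v ≠ []) :
    sWord s (u ++ v) = sWord s u * sWord s v := by
  induction u with
  | nil => exact absurd rfl hu
  | cons a u ih =>
    rcases eq_or_ne u [] with rfl | hu'
    · exact sWord_cons s a hv
    · rw [List.cons_append, sWord_cons s a (by simp [hu']), sWord_cons s a hu', ih hu',
        mul_assoc]

end Words

namespace LRep

variable {B : Type*} [NonUnitalRing B] [StarRing B] {G : DirGraph V E} {L : E → 𝒜}
  (rep : LRep G L B)

lemma p_mul_sWord (hL : Function.Surjective L) {A : Set V} (hA : Bbar G L A) (w : List 𝒜) :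
    rep.p A * sWord rep.s w = sWord rep.s w * rep.p (relRng G L A w) := by
  induction w using sWord.induct generalizing A with
  | case1 => simp [sWord]
  | case2 a => exact rep.p_s A a hA
  | case3 a b w ih =>
    rw [sWord_cons _ a (List.cons_ne_nil b w), ← mul_assoc, rep.p_s A a hA, mul_assoc,
      ih (hA.relRng hL [a]), ← mul_assoc, ← relRng_cons A a (List.cons_ne_nil b w)]

lemma star_sWord_mul_p (hL : Function.Surjective L) {A : Set V} (hA : Bbar G L A)
    (w : List 𝒜) :
    star (sWord rep.s w) * rep.p A = rep.p (relRng G L A w) * star (sWord rep.s w) := by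
  simpa [rep.p_sa A hA, rep.p_sa _ (hA.relRng hL w)] using congrArg star (rep.p_mul_sWord hL hA w)

open Classical in
lemma star_sWord_mul_sWord (hL : Function.Surjective L) {u v : List 𝒜}
    (hlen : u.length = v.length) (hu : u ≠ []) :
    star (sWord rep.s u) * sWord rep.s v = if u = v then rep.p (rngW G L u) else 0 := by
  induction u generalizing v with
  | nil => exact absurd rfl hu
  | cons a u ih =>
    obtain ⟨b, v, rfl⟩ := List.exists_cons_of_ne_nil (List.ne_nil_of_length_pos
      (hlen ▸ List.length_pos_iff.mpr hu))
    have hlen' : u.length = v.length := by simpa using hlen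
    rcases eq_or_ne u [] with rfl | hu'
    · obtain rfl : v = [] := List.eq_nil_of_length_eq_zero hlen'.symm
      by_cases hab : a = b
      · subst hab
        rw [if_pos rfl]
        exact rep.s_s a
      · rw [if_neg (by simpa using hab)]
        exact rep.s_orth a b hab
    have hv' : v ≠ [] := by rintro rfl; exact hu' (List.eq_nil_of_length_eq_zero hlen')
    have hsplit : star (sWord rep.s (a :: u)) * sWord rep.s (b :: v) =
        star (sWord rep.s u) * (star (rep.s a) * rep.s b) * sWord rep.s v := by
      simp only [sWord_cons _ a hu', sWord_cons _ b hv', star_mul, mul_assoc]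
    rw [hsplit]
    by_cases hab : a = b
    · subst hab
      rw [rep.s_s, mul_assoc, rep.p_mul_sWord hL (Bbar.base _ (isLabelWord_singleton hL a)),
        ← mul_assoc, ih hlen' hu']
      by_cases huv : u = v
      · subst huv
        rw [if_pos rfl, if_pos rfl, rep.p_mul _ _ (Bbar.rngW hL hu')
          ((Bbar.base _ (isLabelWord_singleton hL a)).relRng hL u),
          Set.inter_eq_right.mpr (relRng_subset_rngW _ _), rngW_cons a hu']
      · simp [huv]
    · simp [rep.s_orth a b hab, hab]

lemma star_sWord_mul_p_mul_sWord (hL : Function.Surjective L) {A : Set V} (hA : Bbar G L A)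
    (w : List 𝒜) : star (sWord rep.s w) * rep.p A * sWord rep.s w = rep.p (relRng G L A w) := by
  rcases eq_or_ne w [] with rfl | hw
  · simp [sWord, relRng_nil, rep.p_empty]
  rw [mul_assoc, rep.p_mul_sWord hL hA, ← mul_assoc, rep.star_sWord_mul_sWord hL rfl hw,
    if_pos rfl, rep.p_mul _ _ (Bbar.rngW hL hw) (hA.relRng hL w),
    Set.inter_eq_right.mpr (relRng_subset_rngW A w)]

lemma p_eq_p_inter_add_p_diff {D X : Set V} (hD : Bbar G L D) (hX : Bbar G L X) :
    rep.p D = rep.p (D ∩ X) + rep.p (D \ X) := by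
  have hdisj : (D ∩ X) ∩ (D \ X) = ∅ :=
    Set.eq_empty_of_forall_notMem fun _ hv => hv.2.2 hv.1.2
  conv_lhs => rw [← Set.inter_union_sdiff D X]
  rw [rep.p_union _ _ (hD.inter _ _ hX) (hD.diff _ _ hX), hdisj, rep.p_empty, sub_zero]

lemma p_mem_of_subset_biUnion (I : TwoSidedIdeal B) {ι : Type*} (s : Finset ι) {f : ι → Set V}
    (hf : ∀ i ∈ s, Bbar G L (f i)) (hfI : ∀ i ∈ s, rep.p (f i) ∈ I) {D : Set V}
    (hD : Bbar G L D) (hsub : D ⊆ ⋃ i ∈ s, f i) : rep.p D ∈ I := by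
  classical
  induction s using Finset.induction_on generalizing D with
  | empty =>
    have hD0 : D = ∅ := by simpa using hsub
    rw [hD0, rep.p_empty]
    exact zero_mem I
  | insert i s _ ih =>
    have hfi := hf i (Finset.mem_insert_self i s)
    rw [rep.p_eq_p_inter_add_p_diff hD hfi]
    refine add_mem ?_ (ih (fun j hj => hf j (Finset.mem_insert_of_mem hj))
      (fun j hj => hfI j (Finset.mem_insert_of_mem hj)) (hD.diff _ _ hfi) ?_)
    · rw [← rep.p_mul _ _ hD hfi]
      exact I.mul_mem_left _ _ (hfI i (Finset.mem_insert_self i s))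
    · intro v ⟨hvD, hvi⟩
      simpa [hvi] using hsub hvD

lemma p_mem_of_forall_relRng_singleton (hnosink : G.sinks = ∅) (I : TwoSidedIdeal B)
    {A : Set V} (hA : Bbar G L A) (h : ∀ e, G.src e ∈ A → rep.p (relRng G L A [L e]) ∈ I) :
    rep.p A ∈ I := by
  rw [rep.ck A hA, hnosink, Set.inter_empty, rep.p_empty, add_zero]
  refine finsum_mem_induction (· ∈ I) (zero_mem I) (fun _ _ => add_mem) ?_
  rintro _ ⟨e, he, rfl⟩
  exact I.mul_mem_right _ _ (I.mul_mem_left _ _ (h e he))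

lemma p_mem_of_forall_labelsFromLen (hL : Function.Surjective L) (hnosink : G.sinks = ∅)
    (I : TwoSidedIdeal B) {N : ℕ} (hN : 1 ≤ N) {A : Set V} (hA : Bbar G L A)
    (h : ∀ β ∈ labelsFromLen G L A N, rep.p (relRng G L A β) ∈ I) : rep.p A ∈ I := by
  induction N, hN using Nat.le_induction generalizing A with
  | base =>
    exact rep.p_mem_of_forall_relRng_singleton hnosink I hA fun e he =>
      h _ (singleton_mem_labelsFromLen_one he)
  | succ N hN ih =>
    refine rep.p_mem_of_forall_relRng_singleton hnosink I hA fun e _ =>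
      ih (hA.relRng hL _) fun β hβ => ?_
    have hne : β ≠ [] := List.ne_nil_of_length_pos (by rw [length_of_mem_labelsFromLen hβ]; omega)
    exact relRng_cons A (L e) hne ▸ h _ (cons_mem_labelsFromLen hβ)

lemma elt_star {C : Set V} (hC : Bbar G L C) (α β : Option (List 𝒜)) :
    star (rep.elt α C β) = rep.elt β C α := by
  cases α <;> cases β <;> simp [LRep.elt, star_mul, rep.p_sa C hC, mul_assoc]

lemma elt_some_left (u : List 𝒜) (C : Set V) (β : Option (List 𝒜)) :
    rep.elt (some u) C β = sWord rep.s u * rep.elt none C β := by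
  cases β
  · rfl
  · exact mul_assoc _ _ _

lemma elt_mul_eq_of_none_left {C C' : Set V} {β β' : Option (List 𝒜)} {g : B}
    (h : rep.elt none C β * g = rep.elt none C' β') (α : Option (List 𝒜)) :
    rep.elt α C β * g = rep.elt α C' β' := by
  cases α
  · exact h
  · rw [elt_some_left, mul_assoc, h, ← elt_some_left]

lemma elt_mul_eq_zero_of_none_left {C : Set V} {β : Option (List 𝒜)} {g : B}
    (h : rep.elt none C β * g = 0) (α : Option (List 𝒜)) : rep.elt α C β * g = 0 := by
  cases α
  · exact h
  · rw [elt_some_left, mul_assoc, h, mul_zero]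

lemma elt_mul_p (hL : Function.Surjective L) {C D : Set V} (hC : Bbar G L C)
    (hD : Bbar G L D) (α β : Option (List 𝒜)) :
    rep.elt α C β * rep.p D = rep.elt α (C ∩ relRngE G L D β) β := by
  refine rep.elt_mul_eq_of_none_left ?_ α
  cases β with
  | none => exact rep.p_mul C D hC hD
  | some w =>
    change rep.p C * star (sWord rep.s w) * rep.p D = rep.p (C ∩ relRng G L D w) * _
    rw [mul_assoc, rep.star_sWord_mul_p hL hD, ← mul_assoc, rep.p_mul _ _ hC (hD.relRng hL w)]

lemma elt_mul_star_s (α : Option (List 𝒜)) (C : Set V) {β : Option (List 𝒜)}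
    (hβ : β ≠ some []) (a : 𝒜) :
    rep.elt α C β * star (rep.s a) = rep.elt α C (some (a :: β.getD [])) := by
  refine rep.elt_mul_eq_of_none_left ?_ α
  cases β with
  | none => rfl
  | some w =>
    change rep.p C * star (sWord rep.s w) * star (rep.s a) = rep.p C * star (sWord rep.s (a :: w))
    rw [mul_assoc, ← star_mul, sWord_cons _ a (fun h => hβ (congrArg some h))]

lemma elt_none_mul_s {C : Set V} (hC : Bbar G L C) {α : Option (List 𝒜)}
    (hα : α ≠ some []) (a : 𝒜) :
    rep.elt α C none * rep.s a = rep.elt (some (α.getD [] ++ [a])) (relRng G L C [a]) none := by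
  cases α with
  | none => exact rep.p_s C a hC
  | some u =>
    change sWord rep.s u * rep.p C * rep.s a = sWord rep.s (u ++ [a]) * _
    rw [mul_assoc, rep.p_s C a hC, ← mul_assoc,
      sWord_append _ (fun h => hα (congrArg some h)) (List.cons_ne_nil a [])]
    rfl

lemma elt_cons_mul_s_of_ne {a b : 𝒜} (hba : b ≠ a) (α : Option (List 𝒜)) (C : Set V)
    (w : List 𝒜) : rep.elt α C (some (b :: w)) * rep.s a = 0 := by
  refine rep.elt_mul_eq_zero_of_none_left ?_ α
  change rep.p C * star (sWord rep.s (b :: w)) * rep.s a = 0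
  rcases eq_or_ne w [] with rfl | hw
  · change rep.p C * star (rep.s b) * rep.s a = 0
    rw [mul_assoc, rep.s_orth b a hba, mul_zero]
  · rw [sWord_cons _ b hw, star_mul, mul_assoc, mul_assoc, rep.s_orth b a hba, mul_zero,
      mul_zero]

lemma elt_singleton_mul_s (hL : Function.Surjective L) {C : Set V} (hC : Bbar G L C)
    (α : Option (List 𝒜)) (a : 𝒜) :
    rep.elt α C (some [a]) * rep.s a = rep.elt α (C ∩ rngW G L [a]) none := by
  refine rep.elt_mul_eq_of_none_left ?_ α
  change rep.p C * star (rep.s a) * rep.s a = _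
  rw [mul_assoc, rep.s_s, rep.p_mul _ _ hC (Bbar.base _ (isLabelWord_singleton hL a))]
  rfl

lemma elt_cons_mul_s (hL : Function.Surjective L) {C : Set V} (hC : Bbar G L C)
    (α : Option (List 𝒜)) (a : 𝒜) {w : List 𝒜} (hw : w ≠ []) :
    rep.elt α C (some (a :: w)) * rep.s a = rep.elt α (C ∩ rngW G L (a :: w)) (some w) := by
  refine rep.elt_mul_eq_of_none_left ?_ α
  change rep.p C * star (sWord rep.s (a :: w)) * rep.s a =
    rep.p (C ∩ rngW G L (a :: w)) * star (sWord rep.s w)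
  rw [sWord_cons _ a hw, star_mul, mul_assoc, mul_assoc, rep.s_s,
    rep.star_sWord_mul_p hL (Bbar.base _ (isLabelWord_singleton hL a)), ← rngW_cons a hw,
    ← mul_assoc, rep.p_mul _ _ hC (Bbar.rngW hL (List.cons_ne_nil a w))]

lemma exists_star_sWord_mul_elt_mul_sWord_eq_p (hL : Function.Surjective L) {C : Set V}
    (hC : Bbar G L C) {α β : Option (List 𝒜)} (hα : α ≠ some []) (hβ : β ≠ some [])
    (hlen : (α.getD []).length = (β.getD []).length) {w : List 𝒜}
    (hlt : (α.getD []).length < w.length) :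
    ∃ D, Bbar G L D ∧ D ⊆ relRng G L C (w.drop (α.getD []).length) ∧
      star (sWord rep.s w) * rep.elt α C β * sWord rep.s w = rep.p D := by
  classical
  rcases α with _ | u <;> rcases β with _ | v
  · exact ⟨relRng G L C w, hC.relRng hL w, subset_rfl, rep.star_sWord_mul_p_mul_sWord hL hC w⟩
  · exact absurd (List.eq_nil_of_length_eq_zero (by simpa using hlen.symm)) (by simpa using hβ)
  · exact absurd (List.eq_nil_of_length_eq_zero (by simpa using hlen)) (by simpa using hα)
  simp only [Option.getD_some] at hlen hlt ⊢
  have hu : u ≠ [] := by simpa using hα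
  set t := w.take u.length
  set δ := w.drop u.length
  have ht : t.length = u.length := by simp [t]; omega
  have ht0 : t ≠ [] := List.ne_nil_of_length_pos (ht ▸ List.length_pos_iff.mpr hu)
  have hδ0 : δ ≠ [] := List.ne_nil_of_length_pos (by simp [δ]; omega)
  have hsplit : star (sWord rep.s w) * rep.elt (some u) C (some v) * sWord rep.s w =
      star (sWord rep.s δ) * ((star (sWord rep.s t) * sWord rep.s u) * rep.p C *
        (star (sWord rep.s v) * sWord rep.s t)) * sWord rep.s δ := by
    rw [← List.take_append_drop u.length w, sWord_append _ ht0 hδ0]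
    simp only [LRep.elt, star_mul, mul_assoc]
  rw [hsplit, rep.star_sWord_mul_sWord hL ht ht0,
    rep.star_sWord_mul_sWord hL (hlen.symm.trans ht.symm) (by simpa using hβ)]
  by_cases htu : t = u ∧ v = t
  · obtain ⟨htu, rfl⟩ := htu
    have hD := Bbar.rngW (G := G) hL ht0
    refine ⟨relRng G L (rngW G L t ∩ C ∩ rngW G L t) δ,
      ((hD.inter _ _ hC).inter _ _ hD).relRng hL δ,
      relRng_mono (Set.inter_subset_left.trans Set.inter_subset_right) δ, ?_⟩
    rw [if_pos htu, if_pos rfl, rep.p_mul _ _ hD hC, rep.p_mul _ _ (hD.inter _ _ hC) hD,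
      rep.star_sWord_mul_p_mul_sWord hL ((hD.inter _ _ hC).inter _ _ hD)]
  · refine ⟨∅, hC.empty, Set.empty_subset _, ?_⟩
    rw [rep.p_empty]
    rcases not_and_or.mp htu with h | h <;> simp [h]
lemma p_mem_of_covered (hL : Function.Surjective L) (I : TwoSidedIdeal B) {B' C : Set V}
    (hB' : Bbar G L B') (hB'I : rep.p B' ∈ I) (hC : Bbar G L C) (hcov : Covered G L B' C) :
    rep.p C ∈ I := by
  obtain ⟨S, hS, hsub⟩ := hcov
  refine rep.p_mem_of_subset_biUnion I hS.toFinset (f := relRngE G L B') ?_ ?_ hC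
    (by simpa using hsub)
  · rintro (_ | w) -
    exacts [hB', hB'.relRng hL w]
  · rintro (_ | w) -
    · exact hB'I
    · change rep.p (relRng G L B' w) ∈ I
      rw [← rep.star_sWord_mul_p_mul_sWord hL hB' w]
      exact I.mul_mem_right _ _ (I.mul_mem_left _ _ hB'I)

end LRep

namespace LRep

variable {B : Type*} [NonUnitalCStarAlgebra B] {G : DirGraph V E} {L : E → 𝒜}
  (rep : LRep G L B)

lemma isStarProjection_p {A : Set V} (hA : Bbar G L A) : IsStarProjection (rep.p A) :=
  ⟨by rw [IsIdempotentElem, rep.p_mul A A hA hA, Set.inter_self], rep.p_sa A hA⟩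

lemma norm_s_le_one (hL : Function.Surjective L) (a : 𝒜) : ‖rep.s a‖ ≤ 1 := by
  have h := (rep.isStarProjection_p (Bbar.base [a] (isLabelWord_singleton hL a))).norm_le
  rw [← rep.s_s, CStarRing.norm_star_mul_self] at h
  nlinarith [norm_nonneg (rep.s a)]

lemma norm_sWord_le_one (hL : Function.Surjective L) (w : List 𝒜) : ‖sWord rep.s w‖ ≤ 1 := by
  induction w using sWord.induct with
  | case1 => simp [sWord]
  | case2 a => exact rep.norm_s_le_one hL a
  | case3 a b w ih =>
    rw [sWord_cons _ a (List.cons_ne_nil b w)]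
    exact (norm_mul_le _ _).trans (mul_le_one₀ (rep.norm_s_le_one hL a) (norm_nonneg _) ih)

lemma relRng_subset_of_norm_sub_lt_one (hL : Function.Surjective L)
    (hp : ∀ C : Set V, Bbar G L C → C.Nonempty → rep.p C ≠ 0) {A : Set V} (hA : Bbar G L A)
    {ι : Type*} (s : Finset ι) (c : ι → ℂ) (α β : ι → Option (List 𝒜)) (C : ι → Set V)
    (hC : ∀ i ∈ s, Bbar G L (C i)) (hα : ∀ i ∈ s, α i ≠ some []) (hβ : ∀ i ∈ s, β i ≠ some [])
    (hlen : ∀ i ∈ s, ((α i).getD []).length = ((β i).getD []).length) {w : List 𝒜}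
    (hlt : ∀ i ∈ s, ((α i).getD []).length < w.length)
    (hnorm : ‖rep.p A - ∑ i ∈ s, c i • rep.elt (α i) (C i) (β i)‖ < 1) :
    relRng G L A w ⊆ ⋃ i ∈ s, relRng G L (C i) (w.drop ((α i).getD []).length) := by
  set Q := relRng G L A w \ ⋃ i ∈ s, relRng G L (C i) (w.drop ((α i).getD []).length)
  have hQ : Bbar G L Q := (hA.relRng hL w).diff_biUnion s fun i hi => (hC i hi).relRng hL _
  suffices Q = ∅ from Set.sdiff_eq_empty.mp this
  by_contra hQ0
  refine hp Q hQ (Set.nonempty_iff_ne_empty.mpr hQ0) ?_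
  set z := ∑ i ∈ s, c i • rep.elt (α i) (C i) (β i)
  have hcompress_p : rep.p Q * (star (sWord rep.s w) * rep.p A * sWord rep.s w) * rep.p Q =
      rep.p Q := by
    rw [rep.star_sWord_mul_p_mul_sWord hL hA, rep.p_mul _ _ hQ (hA.relRng hL w),
      Set.inter_eq_left.mpr Set.sdiff_subset, rep.p_mul _ _ hQ hQ, Set.inter_self]
  have hcompress_z : rep.p Q * (star (sWord rep.s w) * z * sWord rep.s w) * rep.p Q = 0 := by
    simp only [z, Finset.mul_sum, Finset.sum_mul, mul_smul_comm, smul_mul_assoc]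
    refine Finset.sum_eq_zero fun i hi => ?_
    obtain ⟨D, hD, hDsub, hDeq⟩ := rep.exists_star_sWord_mul_elt_mul_sWord_eq_p hL (hC i hi)
      (hα i hi) (hβ i hi) (hlen i hi) (hlt i hi)
    have hQD : Q ∩ D = ∅ := Set.eq_empty_of_forall_notMem fun v hv =>
      hv.1.2 (Set.mem_biUnion hi (hDsub hv.2))
    have hterm : rep.p Q * (star (sWord rep.s w) * rep.elt (α i) (C i) (β i) * sWord rep.s w) *
        rep.p Q = 0 := by
      rw [hDeq, rep.p_mul _ _ hQ hD, hQD, rep.p_empty, zero_mul]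
    simp only [mul_assoc] at hterm ⊢
    rw [hterm, smul_zero]
  have hQ_eq : rep.p Q = rep.p Q * (star (sWord rep.s w) * (rep.p A - z) * sWord rep.s w) *
      rep.p Q := by
    rw [mul_sub, sub_mul, mul_sub, sub_mul, hcompress_p, hcompress_z, sub_zero]
  have hsw := rep.norm_sWord_le_one hL w
  refine (rep.isStarProjection_p hQ).eq_zero_of_norm_lt_one ?_
  calc ‖rep.p Q‖ = _ := congrArg norm hQ_eq
    _ ≤ ‖star (sWord rep.s w) * (rep.p A - z) * sWord rep.s w‖ :=
      norm_mul_mul_le_of_norm_le_one (rep.isStarProjection_p hQ).norm_le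
        (rep.isStarProjection_p hQ).norm_le _
    _ ≤ ‖rep.p A - z‖ := norm_mul_mul_le_of_norm_le_one (by rwa [norm_star]) hsw _
    _ < 1 := hnorm

def idealGens (B' : Set V) : Set B :=
  {x | ∃ α C β, Bbar G L C ∧ Covered G L B' C ∧ α ≠ some [] ∧ β ≠ some [] ∧ x = rep.elt α C β}

variable {rep} {B' : Set V}

lemma elt_mem_idealGens {α β : Option (List 𝒜)} {C : Set V} (hC : Bbar G L C)
    (hcov : Covered G L B' C) (hα : α ≠ some []) (hβ : β ≠ some []) :
    rep.elt α C β ∈ rep.idealGens B' :=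
  ⟨α, C, β, hC, hcov, hα, hβ, rfl⟩

lemma star_mem_idealGens {x : B} (hx : x ∈ rep.idealGens B') : star x ∈ rep.idealGens B' := by
  obtain ⟨α, C, β, hC, hcov, hα, hβ, rfl⟩ := hx
  exact rep.elt_star hC α β ▸ elt_mem_idealGens hC hcov hβ hα

lemma mul_p_mem_idealGens (hL : Function.Surjective L) {x : B} (hx : x ∈ rep.idealGens B')
    {D : Set V} (hD : Bbar G L D) : x * rep.p D ∈ rep.idealGens B' := by
  obtain ⟨α, C, β, hC, hcov, hα, hβ, rfl⟩ := hx
  rw [rep.elt_mul_p hL hC hD]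
  refine elt_mem_idealGens (hC.inter _ _ ?_) (hcov.mono Set.inter_subset_left) hα hβ
  cases β
  · exact hD
  · exact hD.relRng hL _

lemma mul_star_s_mem_idealGens {x : B} (hx : x ∈ rep.idealGens B') (a : 𝒜) :
    x * star (rep.s a) ∈ rep.idealGens B' := by
  obtain ⟨α, C, β, hC, hcov, hα, hβ, rfl⟩ := hx
  rw [rep.elt_mul_star_s α C hβ a]
  exact elt_mem_idealGens hC hcov hα (by simp)

lemma mul_s_mem_span_idealGens (hL : Function.Surjective L) {x : B}
    (hx : x ∈ rep.idealGens B') (a : 𝒜) :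
    x * rep.s a ∈ Submodule.span ℂ (rep.idealGens B') := by
  obtain ⟨α, C, β, hC, hcov, hα, hβ, rfl⟩ := hx
  rcases β with _ | ⟨_ | ⟨b, w⟩⟩
  · rw [rep.elt_none_mul_s hC hα a]
    exact Submodule.subset_span
      (elt_mem_idealGens (hC.relRng hL _) (hcov.relRng _) (by simp) (by simp))
  · exact absurd rfl hβ
  by_cases hba : b = a
  · subst hba
    rcases eq_or_ne w [] with rfl | hw
    · rw [rep.elt_singleton_mul_s hL hC]
      exact Submodule.subset_span (elt_mem_idealGens
        (hC.inter _ _ (Bbar.rngW hL (List.cons_ne_nil b []))) (hcov.mono Set.inter_subset_left)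
        hα (by simp))
    · rw [rep.elt_cons_mul_s hL hC α b hw]
      exact Submodule.subset_span (elt_mem_idealGens
        (hC.inter _ _ (Bbar.rngW hL (List.cons_ne_nil b w))) (hcov.mono Set.inter_subset_left)
        hα (by simpa using hw))
  · rw [rep.elt_cons_mul_s_of_ne hba]
    exact zero_mem _

lemma mul_mem_span_idealGens_of_mem_adjoin (hL : Function.Surjective L) {y : B}
    (hy : y ∈ NonUnitalStarAlgebra.adjoin ℂ
      ({x : B | ∃ a : 𝒜, x = rep.s a} ∪ {x : B | ∃ A : Set V, Bbar G L A ∧ x = rep.p A}))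
    {x : B} (hx : x ∈ Submodule.span ℂ (rep.idealGens B')) :
    x * y ∈ Submodule.span ℂ (rep.idealGens B') ∧
      x * star y ∈ Submodule.span ℂ (rep.idealGens B') := by
  induction hy using NonUnitalStarAlgebra.adjoin_induction generalizing x with
  | mem y hy =>
    rcases hy with ⟨a, rfl⟩ | ⟨D, hD, rfl⟩
    · exact ⟨mul_mem_span_of_forall_mem (fun x hx => mul_s_mem_span_idealGens hL hx a) hx,
        mul_mem_span_of_forall_mem
          (fun x hx => Submodule.subset_span (mul_star_s_mem_idealGens hx a)) hx⟩
    · have h := mul_mem_span_of_forall_mem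
        (fun x hx => Submodule.subset_span (mul_p_mem_idealGens hL hx hD)) hx
      simpa [rep.p_sa D hD] using h
  | add y z _ _ hy hz =>
    simpa [mul_add] using ⟨add_mem (hy hx).1 (hz hx).1, add_mem (hy hx).2 (hz hx).2⟩
  | zero => simp
  | mul y z _ _ hy hz =>
    rw [← mul_assoc, star_mul, ← mul_assoc]
    exact ⟨(hz (hy hx).1).1, (hy (hz hx).2).2⟩
  | smul c y _ hy =>
    rw [mul_smul_comm, star_smul, mul_smul_comm]
    exact ⟨Submodule.smul_mem _ c (hy hx).1, Submodule.smul_mem _ _ (hy hx).2⟩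
  | star y _ hy =>
    rw [star_star]
    exact (hy hx).symm

lemma isClosedTwoSidedIdealSet_closure_span_idealGens (hL : Function.Surjective L)
    (hgen : GeneratesAlg G L rep) (B' : Set V) :
    IsClosedTwoSidedIdealSet B (closure (Submodule.span ℂ (rep.idealGens B'))) := by
  refine isClosedTwoSidedIdealSet_closure (dense_iff_closure_eq.mpr hgen) fun x hx y hy =>
    ⟨(mul_mem_span_idealGens_of_mem_adjoin hL hy hx).1, ?_⟩
  have h := (mul_mem_span_idealGens_of_mem_adjoin hL hy
    (star_mem_span_of_forall_mem (fun _ => star_mem_idealGens) hx)).2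
  simpa using star_mem_span_of_forall_mem (fun _ => star_mem_idealGens) h

end LRep

namespace GaugeAction

variable {B : Type*} [NonUnitalCStarAlgebra B] {G : DirGraph V E} {L : E → 𝒜}
  {rep : LRep G L B} (ga : GaugeAction G L rep)

lemma continuous_γ_exp (x : B) : Continuous fun t : ℝ => ga.γ (Circle.exp t) x :=
  (ga.γ_continuous x).comp Circle.exp.continuous

def expectation : B →ₗ[ℂ] B where
  toFun x := (2 * Real.pi)⁻¹ • ∫ t in (0 : ℝ)..2 * Real.pi, ga.γ (Circle.exp t) x
  map_add' x y := by
    rw [← smul_add, ← intervalIntegral.integral_add ((ga.continuous_γ_exp x).intervalIntegrable _ _)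
      ((ga.continuous_γ_exp y).intervalIntegrable _ _)]
    simp only [map_add]
  map_smul' c x := by
    simp only [map_smul, intervalIntegral.integral_smul, RingHom.id_apply, smul_comm c]

lemma norm_expectation_le (x : B) : ‖ga.expectation x‖ ≤ ‖x‖ := by
  have hint : ‖∫ t in (0 : ℝ)..2 * Real.pi, ga.γ (Circle.exp t) x‖ ≤ ‖x‖ * |2 * Real.pi - 0| :=
    intervalIntegral.norm_integral_le_of_norm_le_const fun t _ =>
      (NonUnitalStarAlgHom.norm_map (ga.γ _) (ga.γ _).injective x).le
  change ‖(2 * Real.pi)⁻¹ • ∫ t in (0 : ℝ)..2 * Real.pi, ga.γ (Circle.exp t) x‖ ≤ ‖x‖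
  rw [norm_smul, sub_zero, abs_of_pos Real.two_pi_pos] at *
  rw [Real.norm_of_nonneg (inv_nonneg.mpr Real.two_pi_pos.le)]
  calc _ ≤ (2 * Real.pi)⁻¹ * (‖x‖ * (2 * Real.pi)) := by gcongr
    _ = ‖x‖ := by field_simp

lemma expectation_eq_ite {x : B} (k : ℤ) (hx : ∀ z, ga.γ z x = ((z ^ k : Circle) : ℂ) • x) :
    ga.expectation x = if k = 0 then x else 0 := by
  change (2 * Real.pi)⁻¹ • ∫ t in (0 : ℝ)..2 * Real.pi, ga.γ (Circle.exp t) x = _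
  simp only [hx, intervalIntegral.integral_smul_const, integral_circleExp_zpow]
  split_ifs
  · rw [← Complex.coe_smul, smul_smul, ← Complex.ofReal_mul,
      inv_mul_cancel₀ Real.two_pi_pos.ne', Complex.ofReal_one, one_smul]
  · simp

lemma γ_sWord (z : Circle) (w : List 𝒜) :
    ga.γ z (sWord rep.s w) = ((z ^ w.length : Circle) : ℂ) • sWord rep.s w := by
  induction w using sWord.induct with
  | case1 => simp [sWord]
  | case2 a =>
    change ga.γ z (rep.s a) = ((z ^ 1 : Circle) : ℂ) • rep.s a
    simpa using ga.γ_s z a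
  | case3 a b w ih =>
    rw [sWord_cons _ a (List.cons_ne_nil b w), map_mul, ga.γ_s, ih, smul_mul_smul_comm]
    congr 1
    push_cast [List.length_cons]
    ring

lemma γ_elt (z : Circle) {C : Set V} (hC : Bbar G L C) (α β : Option (List 𝒜)) :
    ga.γ z (rep.elt α C β) =
      ((z ^ (((α.getD []).length : ℤ) - (β.getD []).length) : Circle) : ℂ) • rep.elt α C β := by
  have hstar : ∀ w : List 𝒜, ga.γ z (star (sWord rep.s w)) =
      ((z⁻¹ ^ w.length : Circle) : ℂ) • star (sWord rep.s w) := fun w => by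
    rw [map_star, ga.γ_sWord, star_smul, inv_pow, Circle.coe_inv_eq_conj]
    rfl
  rw [zpow_sub, zpow_natCast, zpow_natCast, ← inv_pow, Circle.coe_mul]
  rcases α with _ | u <;> rcases β with _ | w
  · change ga.γ z (rep.p C) = _ • rep.p C
    simp [ga.γ_p z C hC]
  · change ga.γ z (rep.p C * star (sWord rep.s w)) = _ • (rep.p C * star (sWord rep.s w))
    rw [map_mul, ga.γ_p z C hC, hstar, mul_smul_comm]
    simp
  · change ga.γ z (sWord rep.s u * rep.p C) = _ • (sWord rep.s u * rep.p C)
    rw [map_mul, ga.γ_p z C hC, ga.γ_sWord, smul_mul_assoc]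
    simp
  · change ga.γ z (sWord rep.s u * rep.p C * star (sWord rep.s w)) =
      _ • (sWord rep.s u * rep.p C * star (sWord rep.s w))
    rw [map_mul, map_mul, ga.γ_p z C hC, ga.γ_sWord, hstar, smul_mul_assoc, smul_mul_smul_comm]
    simp

lemma expectation_elt {C : Set V} (hC : Bbar G L C) (α β : Option (List 𝒜)) :
    ga.expectation (rep.elt α C β) =
      if (α.getD []).length = (β.getD []).length then rep.elt α C β else 0 := by
  simp only [ga.expectation_eq_ite _ fun z => ga.γ_elt z hC α β, sub_eq_zero, Nat.cast_inj]

end GaugeAction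

namespace LRep

variable {B : Type*} [NonUnitalCStarAlgebra B] {G : DirGraph V E} {L : E → 𝒜}
  (rep : LRep G L B)

lemma exists_covered_of_mem_closure_span_idealGens (hL : Function.Surjective L)
    (sa : StandingAssumptions G L) (hp : ∀ C : Set V, Bbar G L C → C.Nonempty → rep.p C ≠ 0)
    (ga : GaugeAction G L rep) {A B' : Set V} (hA : Bbar G L A)
    (hmem : rep.p A ∈ closure (Submodule.span ℂ (rep.idealGens B') : Set B)) :
    ∃ N, 1 ≤ N ∧ Covered G L B' (⋃ β ∈ labelsFromLen G L A N, relRng G L A β) := by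
  obtain ⟨z, hz, hdist⟩ := Metric.mem_closure_iff.mp hmem 1 one_pos
  obtain ⟨n, c, x, rfl⟩ := Submodule.mem_span_set'.mp hz
  choose α C β hC hcov hα hβ hx using fun i => (x i).2
  set s := Finset.univ.filter fun i => ((α i).getD []).length = ((β i).getD []).length
  have hE : ga.expectation (∑ i, c i • (x i : B)) =
      ∑ i ∈ s, c i • rep.elt (α i) (C i) (β i) := by
    simp [hx, ga.expectation_elt (hC _), s, Finset.sum_filter]
  have hEp : ga.expectation (rep.p A) = rep.p A := (ga.expectation_elt hA none none).trans (if_pos rfl)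
  have hnorm : ‖rep.p A - ∑ i ∈ s, c i • rep.elt (α i) (C i) (β i)‖ < 1 :=
    calc _ = ‖ga.expectation (rep.p A - ∑ i, c i • (x i : B))‖ := by rw [map_sub, hE, hEp]
      _ ≤ _ := ga.norm_expectation_le _
      _ < 1 := by rwa [dist_eq_norm] at hdist
  set N := 1 + Finset.univ.sup fun i => ((α i).getD []).length
  refine ⟨N, by omega, Covered.biUnion (sa.setFinite A hA N (by omega)) fun w hw => ?_⟩
  refine Covered.mono (Covered.biUnion s.finite_toSet fun i _ => (hcov i).relRng _)
    (rep.relRng_subset_of_norm_sub_lt_one hL hp hA s c α β C (fun i _ => hC i)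
      (fun i _ => hα i) (fun i _ => hβ i) (fun i hi => (Finset.mem_filter.mp hi).2)
      (fun i _ => ?_) hnorm)
  have := Finset.le_sup (f := fun i => ((α i).getD []).length) (Finset.mem_univ i)
  rw [length_of_mem_labelsFromLen hw]
  omega

end LRep

theorem mem_closedIdeal_iff_relRng_subset_general {V E 𝒜 B : Type*}
    [NonUnitalCStarAlgebra B]
    (G : DirGraph V E) (L : E → 𝒜) (hL : Function.Surjective L)
    (hnosink : G.sinks = ∅)
    (sa : StandingAssumptions G L)
    (rep : LRep G L B)
    (hp : ∀ C : Set V, Bbar G L C → C.Nonempty → rep.p C ≠ 0)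
    (hgen : GeneratesAlg G L rep)
    (ga : GaugeAction G L rep)
    (A B' : Set V) (hA : Bbar G L A) (hB' : Bbar G L B') :
    rep.p A ∈ closedIdealGen B (rep.p B') ↔
      ∃ N : ℕ, 1 ≤ N ∧ ∃ (n : ℕ) (μ : Fin n → Option (List 𝒜)),
        (∀ (i : Fin n) (w : List 𝒜), μ i = some w → w ∈ labelsFromGe G L B' 1) ∧
        (⋃ β ∈ labelsFromLen G L A N, relRng G L A β) ⊆
          ⋃ i, relRngE G L B' (μ i) := by
  simp_rw [← covered_iff_exists_fin]
  constructor
  · intro hmem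
    have hB'J : rep.p B' ∈ closure (Submodule.span ℂ (rep.idealGens B') : Set B) :=
      subset_closure (Submodule.subset_span
        (LRep.elt_mem_idealGens (α := none) (β := none) hB' (Covered.self B') nofun nofun))
    exact rep.exists_covered_of_mem_closure_span_idealGens hL sa hp ga hA
      (hmem _ ⟨rep.isClosedTwoSidedIdealSet_closure_span_idealGens hL hgen B', hB'J⟩)
  · rintro ⟨N, hN, hcov⟩
    refine Set.mem_sInter.mpr fun I ⟨hI, hB'I⟩ => ?_
    rw [← hI.mem_toTwoSidedIdeal] at hB'I ⊢
    exact rep.p_mem_of_forall_labelsFromLen hL hnosink _ hN hA fun β hβ =>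
      rep.p_mem_of_covered hL _ hB' hB'I (hA.relRng hL β)
        (hcov.mono (Set.subset_biUnion_of_mem hβ))

/-- Lemma 4.7. Suppose `(E, L)` has no sinks or sources and
let `{s_a, p_A}` be a representation of `(E, L, 𝔅̄)` in a C*-algebra `B`
generated by it, with `p_C ≠ 0` for every nonempty `C ∈ 𝔅̄`, admitting a gauge
action. Then for `A, B' ∈ 𝔅̄`, `p_A` lies in the closed two-sided ideal
generated by `p_{B'}` iff there are `N ≥ 1` and finitely many
`μ_1, …, μ_n ∈ L(B' E^{≥0})` with
`⋃_{β ∈ L(A E^N)} r(A, β) ⊆ ⋃ᵢ r(B', μ_i)`. -/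
theorem mem_closedIdeal_iff_relRng_subset {V E 𝒜 B : Type*}
    [Countable V] [Countable E] [Countable 𝒜]
    [NonUnitalCStarAlgebra B]
    (G : DirGraph V E) (L : E → 𝒜) (hL : Function.Surjective L)
    (hnosink : G.sinks = ∅) (hnosource : ∀ v : V, ∃ e, G.rng e = v)
    (sa : StandingAssumptions G L)
    (rep : LRep G L B)
    (hp : ∀ C : Set V, Bbar G L C → C.Nonempty → rep.p C ≠ 0)
    (hgen : GeneratesAlg G L rep)
    (ga : GaugeAction G L rep)
    (A B' : Set V) (hA : Bbar G L A) (hB' : Bbar G L B') :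
    rep.p A ∈ closedIdealGen B (rep.p B') ↔
      ∃ N : ℕ, 1 ≤ N ∧ ∃ (n : ℕ) (μ : Fin n → Option (List 𝒜)),
        (∀ (i : Fin n) (w : List 𝒜), μ i = some w → w ∈ labelsFromGe G L B' 1) ∧
        (⋃ β ∈ labelsFromLen G L A N, relRng G L A β) ⊆
          ⋃ i, relRngE G L B' (μ i) :=
  mem_closedIdeal_iff_relRng_subset_general G L hL hnosink sa rep hp hgen ga A B' hA hB'

end
end

section
/- Let E be a countable directed graph with no sinks or sources and (E,L,𝔅̄) the associated labeled space. If (E,L,𝔅̄) has no repeatable paths, then it is disagreeable; that is, for every vertex v ∈ E^0, every l ≥ 1, and every N > 0, there exists a labeled path α ∈ L([v]_l E^{≥N}) that is not agreeable. -/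
/-! # Common framework for labeled graph C*-algebras

Directed graphs, finite paths, labeled spaces `(E, L, 𝔅̄)` where `𝔅̄` is the
smallest accommodating set closed under relative complements (and containing
the sink parts of its members), loops and generalized loops, representations
of labeled spaces in C*-algebras, gauge actions, infinite projections,
AF algebras, and closed two-sided ideals. -/

noncomputable section

variable {V E 𝒜 : Type*}

/-! Following the infinite path that starts at `v` (it exists because there are no sinks), all its
long initial labels would be agreeable, of the form `β^k β'` with `|β| ≤ l`. Each such `β` is an
initial segment of the infinite label sequence, so by pigeonhole one `β` serves for arbitrarily
long initial labels, with arbitrarily large `k`. Then every power of `β` is an initial segment of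
a labeled path, so `β` is repeatable. -/

section WordPow

variable {α : Type*}

@[simp]
lemma wordPow_one (w : List α) : wordPow w 1 = w := by
  simp [wordPow]

@[simp]
lemma length_wordPow (w : List α) (n : ℕ) : (wordPow w n).length = n * w.length := by
  simp [wordPow]

lemma wordPow_add (w : List α) (m n : ℕ) : wordPow w (m + n) = wordPow w m ++ wordPow w n := by
  simp only [wordPow, List.replicate_add, List.flatten_append]

lemma wordPow_prefix_wordPow (w : List α) {m n : ℕ} (h : m ≤ n) : wordPow w m <+: wordPow w n := by
  obtain ⟨c, rfl⟩ := Nat.exists_eq_add_of_le h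
  rw [wordPow_add]
  exact List.prefix_append _ _

lemma wordPow_ne_nil {w : List α} (hw : w ≠ []) {n : ℕ} (hn : n ≠ 0) : wordPow w n ≠ [] := by
  rw [← List.length_pos_iff, length_wordPow]
  exact Nat.mul_pos (Nat.pos_of_ne_zero hn) (List.length_pos_iff.2 hw)

end WordPow

namespace Stream'

variable {α : Type*}

lemma eq_take_length_of_prefix_take {x : Stream' α} {u : List α} {n : ℕ} (h : u <+: x.take n) :
    u = x.take u.length := by
  calc u = (x.take n).take u.length := List.prefix_iff_eq_take.1 h
    _ = x.take u.length := by rw [take_take, min_eq_right (by simpa using h.length_le)]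

lemma le_of_take_eq_wordPow_append {x : Stream' α} {n k : ℕ} {β β' : List α} (hβ' : β' <+: β)
    (h : x.take n = wordPow β k ++ β') : n ≤ (k + 1) * β.length := by
  have hlen := congrArg List.length h
  simp only [length_take, List.length_append, length_wordPow] at hlen
  linarith [hβ'.length_le]

lemma eq_take_of_take_eq_wordPow_append {x : Stream' α} {n k : ℕ} {β β' : List α} (hk : k ≠ 0)
    (h : x.take n = wordPow β k ++ β') : β = x.take β.length := by
  apply eq_take_length_of_prefix_take (n := n)
  have hβk : β <+: wordPow β k := by
    simpa using wordPow_prefix_wordPow β (Nat.one_le_iff_ne_zero.2 hk)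
  rw [h]
  exact hβk.trans (List.prefix_append _ _)

theorem exists_forall_wordPow_prefix_take {x : Stream' α} {l : ℕ}
    (h : ∀ᶠ n in Filter.atTop, ∃ (k : ℕ) (β β' : List α),
      β ≠ [] ∧ β.length ≤ l ∧ β' <+: β ∧ x.take n = wordPow β k ++ β') :
    ∃ β ≠ [], ∀ r, ∃ n, wordPow β r <+: x.take n := by
  obtain ⟨n₀, hn₀⟩ := Filter.eventually_atTop.1 h
  choose k β β' hβ hβl hβ' hx using fun m => hn₀ (m + n₀ + l + 1) (by omega)
  have hk : ∀ m, k m ≠ 0 := fun m hk0 => by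
    have := le_of_take_eq_wordPow_append (hβ' m) (hx m)
    simp only [hk0, zero_add, one_mul] at this
    linarith [hβl m]
  have hβx : ∀ m, β m = x.take (β m).length := fun m =>
    eq_take_of_take_eq_wordPow_append (hk m) (hx m)
  let period : ℕ → Fin (l + 1) := fun m => ⟨(β m).length, Nat.lt_succ_of_le (hβl m)⟩
  obtain ⟨j, hj⟩ := Finite.exists_infinite_fiber period
  have hfiber : ∀ m ∈ period ⁻¹' {j}, β m = x.take j := fun m hm => by
    rw [hβx m]
    exact congrArg (fun i : Fin (l + 1) => x.take i) hm
  obtain ⟨m₁, hm₁, -⟩ := (Set.infinite_coe_iff.1 hj).exists_gt 0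
  refine ⟨x.take j, hfiber m₁ hm₁ ▸ hβ m₁, fun r => ?_⟩
  obtain ⟨m, hm, hrm⟩ := (Set.infinite_coe_iff.1 hj).exists_gt (r * l)
  have hrk : r ≤ k m := by
    have hn := le_of_take_eq_wordPow_append (hβ' m) (hx m)
    have : (r + 1) * l < (k m + 1) * l :=
      calc (r + 1) * l < m + n₀ + l + 1 := by linarith
        _ ≤ (k m + 1) * (β m).length := hn
        _ ≤ (k m + 1) * l := Nat.mul_le_mul_left _ (hβl m)
    have := Nat.lt_of_mul_lt_mul_right this
    omega
  refine ⟨m + n₀ + l + 1, ?_⟩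
  rw [hx m, ← hfiber m hm]
  exact (wordPow_prefix_wordPow _ hrk).trans (List.prefix_append _ _)

end Stream'

section LabeledPaths

variable {G : DirGraph V E} {L : E → 𝒜}

lemma DirGraph.exists_src_eq_of_sinks_eq_empty (h : G.sinks = ∅) (u : V) : ∃ e, G.src e = u := by
  by_contra! hu
  exact h.subset (show u ∈ G.sinks from hu)

lemma DirGraph.exists_edgeStream (h : ∀ u, ∃ e, G.src e = u) (v : V) :
    ∃ es : Stream' E, G.src (es.get 0) = v ∧ ∀ n, G.rng (es.get n) = G.src (es.get (n + 1)) := by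
  choose next hnext using h
  refine ⟨Stream'.iterate (fun e => next (G.rng e)) (next v), hnext v, fun n => ?_⟩
  rw [Stream'.get_succ_iterate', hnext]

namespace GPath

def ofStream (es : Stream' E) (hes : ∀ n, G.rng (es.get n) = G.src (es.get (n + 1))) (n : ℕ) :
    GPath G where
  edges := es.take (n + 1)
  ne := by rw [← List.length_pos_iff, Stream'.length_take]; omega
  chain := List.isChain_iff_getElem.2 fun i hi => by
    simpa only [Stream'.take_get] using hes i

variable {es : Stream' E} {hes : ∀ n, G.rng (es.get n) = G.src (es.get (n + 1))} {n : ℕ}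

@[simp]
lemma source_ofStream : (ofStream es hes n).source = G.src (es.get 0) := by
  simp [ofStream, source, Stream'.take_succ]

@[simp]
lemma length_ofStream : (ofStream es hes n).length = n + 1 := by
  simp [ofStream, length]

@[simp]
lemma label_ofStream : (ofStream es hes n).label L = (es.map L).take (n + 1) := by
  simp [ofStream, label, Stream'.map_take]

end GPath

lemma IsLabelWord.of_prefix {w u : List 𝒜} (hw : IsLabelWord G L w) (hu : u ≠ [])
    (hpre : u <+: w) : IsLabelWord G L u := by
  obtain ⟨p, rfl⟩ := hw
  have hu_eq : u = (p.edges.take u.length).map L := by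
    rw [List.map_take]
    exact List.prefix_iff_eq_take.1 hpre
  refine ⟨⟨p.edges.take u.length, ?_, p.chain.take _⟩, hu_eq.symm⟩
  rw [Ne, List.take_eq_nil_iff, not_or, List.length_eq_zero_iff]
  exact ⟨hu, p.ne⟩

lemma AgreeableW.exists_wordPow_append {l : ℕ} {α : List 𝒜} (h : AgreeableW G L l α) :
    ∃ (k : ℕ) (β β' : List 𝒜), β ≠ [] ∧ β.length ≤ l ∧ β' <+: β ∧ α = wordPow β k ++ β' := by
  obtain ⟨k, β, β', -, -, hβl, hβ', hpre, rfl⟩ := h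
  exact ⟨k, β, β', fun hβ => hβ' (List.prefix_nil.1 (hβ ▸ hpre)), hβl, hpre, rfl⟩

lemma mem_gvtx_self {l : ℕ} {v : V} (hv : ∃ e, G.rng e = v) : v ∈ gvtx G L l v :=
  ⟨hv, rfl⟩

lemma DirGraph.exists_labelStream (h : ∀ u, ∃ e, G.src e = u) (v : V) :
    ∃ x : Stream' 𝒜, ∀ n, ∃ p : GPath G,
      p.source = v ∧ p.length = n + 1 ∧ p.label L = x.take (n + 1) := by
  obtain ⟨es, hes₀, hes⟩ := G.exists_edgeStream h v
  exact ⟨es.map L, fun n => ⟨GPath.ofStream es hes n, by simpa using hes₀, by simp, by simp⟩⟩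

end LabeledPaths

theorem no_repeatable_implies_disagreeable_general {V E 𝒜 : Type*}
    (G : DirGraph V E) (L : E → 𝒜)
    (hnosink : G.sinks = ∅) (hnosource : ∀ v : V, ∃ e, G.rng e = v)
    (hnorep : ¬ ∃ α : List 𝒜, IsLabelWord G L α ∧ Repeatable G L α) :
    ∀ (v : V) (l N : ℕ), 1 ≤ l → 0 < N →
      ∃ α ∈ labelsFromGe G L (gvtx G L l v) N, ¬ AgreeableW G L l α := by
  intro v l N _ _
  by_contra! hagree
  obtain ⟨x, hx⟩ := G.exists_labelStream (L := L) (G.exists_src_eq_of_sinks_eq_empty hnosink) v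
  have hperiodic : ∀ᶠ n in Filter.atTop, ∃ (k : ℕ) (β β' : List 𝒜),
      β ≠ [] ∧ β.length ≤ l ∧ β' <+: β ∧ x.take n = wordPow β k ++ β' := by
    refine Filter.eventually_atTop.2 ⟨N + 1, fun n hn => ?_⟩
    obtain ⟨m, rfl⟩ : ∃ m, n = m + 1 := ⟨n - 1, by omega⟩
    obtain ⟨p, hpv, hplen, hpx⟩ := hx m
    have hpsrc : p.source ∈ gvtx G L l v := by rw [hpv]; exact mem_gvtx_self (hnosource v)
    exact (hagree _ ⟨p, hpsrc, by omega, hpx⟩).exists_wordPow_append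
  obtain ⟨β, hβ, hprefix⟩ := Stream'.exists_forall_wordPow_prefix_take hperiodic
  have hpow : ∀ r ≠ 0, IsLabelWord G L (wordPow β r) := fun r hr => by
    obtain ⟨n, hn⟩ := hprefix r
    obtain ⟨p, -, -, hpx⟩ := hx n
    exact IsLabelWord.of_prefix ⟨p, hpx⟩ (wordPow_ne_nil hβ hr)
      (hn.trans (Stream'.take_prefix_take_left _ _ _ n.le_succ))
  exact hnorep ⟨β, by simpa using hpow 1 one_ne_zero, fun r hr => hpow r (by omega)⟩

/-- final Proposition of Section 4. Let `E` be a countable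
directed graph with no sinks or sources. If the labeled space `(E, L, 𝔅̄)` has
no repeatable paths, then it is disagreeable: for every vertex `v`, every
`l ≥ 1` and every `N > 0` there is a labeled path `α ∈ L([v]_l E^{≥N})` that
is not agreeable. -/
theorem no_repeatable_implies_disagreeable {V E 𝒜 : Type*}
    [Countable V] [Countable E] [Countable 𝒜]
    (G : DirGraph V E) (L : E → 𝒜) (hL : Function.Surjective L)
    (hnosink : G.sinks = ∅) (hnosource : ∀ v : V, ∃ e, G.rng e = v)
    (sa : StandingAssumptions G L)
    (hnorep : ¬ ∃ α : List 𝒜, IsLabelWord G L α ∧ Repeatable G L α) :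
    ∀ (v : V) (l N : ℕ), 1 ≤ l → 0 < N →
      ∃ α ∈ labelsFromGe G L (gvtx G L l v) N, ¬ AgreeableW G L l α :=
  no_repeatable_implies_disagreeable_general G L hnosink hnosource hnorep

end
end
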